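/- Let f : ℝⁿ → [0,∞) be continuously differentiable, x ∈ ℝⁿ, and p ∈ ℝⁿ a descent direction of f at x, i.e. ⟪∇f(x), p⟫ < 0. Fix constants 0 < c₁ < c₂ < 1. Then there exists a nonempty open interval I ⊆ (0,∞) such that every α ∈ I satisfies the Wolfe conditions: f(x + αp) ≤ f(x) + c₁ α ⟪∇f(x), p⟫ and c₂ ⟪∇f(x), p⟫ ≤ ⟪∇f(x + αp), p⟫. -/

import Mathlib

open Set Filter Topology
open scoped RealInnerProductSpace

/-!
Along the ray write `φ t = f (x + t • p)` and consider the sufficient-decrease gap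
`h t = φ t - φ 0 - c₁ * t * φ' 0`. It is negative just to the right of `0`, since
`h' 0 = (1 - c₁) * φ' 0 < 0`, and nonnegative far out, since `φ` is bounded below while
`c₁ * t * φ' 0 → -∞`. A minimiser `c` of `h` in between is interior, so `h c < 0` and
`φ' c = c₁ * φ' 0 > c₂ * φ' 0`; both strict inequalities persist on a neighbourhood of `c`.
-/

theorem exists_mem_Ioo_isLocalMin_le {X Y : Type*}
    [ConditionallyCompleteLinearOrder X] [TopologicalSpace X] [OrderTopology X]
    [LinearOrder Y] [TopologicalSpace Y] [OrderTopology Y] {f : X → Y} {a b s : X}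
    (hfc : ContinuousOn f (Icc a b)) (hs : s ∈ Icc a b) (hsa : f s < f a) (hsb : f s < f b) :
    ∃ c ∈ Ioo a b, IsLocalMin f c ∧ f c ≤ f s := by
  obtain ⟨c, hc, hmin⟩ := isCompact_Icc.exists_isMinOn ⟨s, hs⟩ hfc
  have hcs : f c ≤ f s := hmin hs
  have hac : a < c := hc.1.lt_of_ne (by rintro rfl; exact hsa.not_ge hcs)
  have hcb : c < b := hc.2.lt_of_ne (by rintro rfl; exact hsb.not_ge hcs)
  exact ⟨c, ⟨hac, hcb⟩, hmin.isLocalMin (Icc_mem_nhds hac hcb), hcs⟩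

theorem HasDerivAt.exists_gt_lt_of_neg {f : ℝ → ℝ} {f' a : ℝ} (hf : HasDerivAt f f' a)
    (hf' : f' < 0) : ∃ b > a, f b < f a := by
  have hslope : ∀ᶠ t in 𝓝[>] 0, t⁻¹ • (f (a + t) - f a) < 0 :=
    hf.tendsto_slope_zero_right.eventually_lt_const hf'
  obtain ⟨t, hneg, ht : 0 < t⟩ := (hslope.and self_mem_nhdsWithin).exists
  rw [smul_eq_mul] at hneg
  exact ⟨a + t, by linarith, by linarith [neg_of_mul_neg_right hneg (inv_nonneg.2 ht.le)]⟩

theorem exists_Ioo_wolfe_of_hasDerivAt {φ φ' : ℝ → ℝ} (hφ : ∀ t, HasDerivAt φ (φ' t) t)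
    (hφ' : Continuous φ') (hbdd : BddBelow (range φ)) (hdesc : φ' 0 < 0) {c₁ c₂ : ℝ}
    (hc₁ : 0 < c₁) (hc₁_lt_one : c₁ < 1) (hc₁₂ : c₁ < c₂) :
    ∃ a b, 0 < a ∧ a < b ∧ ∀ α ∈ Ioo a b, φ α ≤ φ 0 + c₁ * α * φ' 0 ∧ c₂ * φ' 0 ≤ φ' α := by
  set h : ℝ → ℝ := fun t => φ t - φ 0 - c₁ * t * φ' 0 with h_def
  have hh : ∀ t, HasDerivAt h (φ' t - c₁ * φ' 0) t := fun t => by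
    simpa only [mul_one] using
      ((hφ t).sub_const (φ 0)).fun_sub (((hasDerivAt_id' t).const_mul c₁).mul_const (φ' 0))
  have hcont : Continuous h := continuous_iff_continuousAt.2 fun t => (hh t).continuousAt
  have h0 : h 0 = 0 := by simp [h_def]
  obtain ⟨s, hs0, hs⟩ : ∃ s > 0, h s < h 0 := (hh 0).exists_gt_lt_of_neg (by nlinarith)
  obtain ⟨m, hm⟩ := hbdd
  have hlow : ∀ t, m - φ 0 + c₁ * t * -φ' 0 ≤ h t := fun t => by
    simp only [h_def]; linarith [hm (mem_range_self t)]
  set T := (φ 0 - m) / (c₁ * -φ' 0)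
  have hc₁D : 0 < c₁ * -φ' 0 := mul_pos hc₁ (neg_pos.2 hdesc)
  have hT : h 0 ≤ h T := by
    have hTm : T * (c₁ * -φ' 0) = φ 0 - m := div_mul_cancel₀ _ hc₁D.ne'
    linarith [hlow T]
  have hsT : s < T := by
    rw [lt_div_iff₀ hc₁D]; linarith [hlow s]
  obtain ⟨c, hc, hmin, hcs⟩ :=
    exists_mem_Ioo_isLocalMin_le hcont.continuousOn ⟨hs0.le, hsT.le⟩ hs (hs.trans_le hT)
  have hcurv : c₂ * φ' 0 < φ' c := by
    linarith [hmin.hasDerivAt_eq_zero (hh c), mul_lt_mul_of_neg_right hc₁₂ hdesc]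
  have hwolfe : ∀ᶠ t in 𝓝 c, h t < 0 ∧ c₂ * φ' 0 < φ' t :=
    (hcont.continuousAt.eventually_lt continuousAt_const (h0 ▸ hcs.trans_lt hs)).and
      (continuousAt_const.eventually_lt hφ'.continuousAt hcurv)
  obtain ⟨b, hcb, hsub⟩ := exists_Ico_subset_of_mem_nhds hwolfe ⟨c + 1, by linarith⟩
  refine ⟨c, b, hc.1, hcb, fun α hα => ?_⟩
  obtain ⟨hdecr, hcurvα⟩ := hsub (Ioo_subset_Ico_self hα)
  exact ⟨by simp only [h_def] at hdecr; linarith, hcurvα.le⟩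

section Line

variable {E : Type*} [NormedAddCommGroup E] [InnerProductSpace ℝ E] [CompleteSpace E]
  {f : E → ℝ} {x p : E}

theorem DifferentiableAt.hasDerivAt_comp_add_smul {t : ℝ} (hf : DifferentiableAt ℝ f (x + t • p)) :
    HasDerivAt (fun s : ℝ => f (x + s • p)) ⟪gradient f (x + t • p), p⟫ t := by
  rw [inner_gradient_left]
  have hline : HasDerivAt (fun s : ℝ => x + s • p) p t := by
    simpa using ((hasDerivAt_id t).smul_const p).const_add x
  exact hf.hasFDerivAt.comp_hasDerivAt t hline

theorem ContDiff.continuous_inner_gradient_add_smul (hf : ContDiff ℝ 1 f) :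
    Continuous fun t : ℝ => ⟪gradient f (x + t • p), p⟫ := by
  simp_rw [inner_gradient_left]
  exact ((hf.continuous_fderiv one_ne_zero).comp (by fun_prop)).clm_apply continuous_const

end Line

theorem wolfe_interval_exists (n : ℕ) (f : EuclideanSpace ℝ (Fin n) → ℝ)
    (hf : ContDiff ℝ 1 f) (hf0 : ∀ y, 0 ≤ f y)
    (x p : EuclideanSpace ℝ (Fin n))
    (hdesc : (inner ℝ (gradient f x) p : ℝ) < 0)
    (c₁ c₂ : ℝ) (hc₁ : 0 < c₁) (hc₁₂ : c₁ < c₂) (hc₂ : c₂ < 1) :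
    ∃ a b : ℝ, 0 < a ∧ a < b ∧ ∀ α ∈ Set.Ioo a b,
      f (x + α • p) ≤ f x + c₁ * α * (inner ℝ (gradient f x) p : ℝ) ∧
      c₂ * (inner ℝ (gradient f x) p : ℝ) ≤ (inner ℝ (gradient f (x + α • p)) p : ℝ) := by
  have hline (t : ℝ) := ((hf.differentiable one_ne_zero) (x + t • p)).hasDerivAt_comp_add_smul
  have hbdd : BddBelow (range fun t : ℝ => f (x + t • p)) := ⟨0, by rintro _ ⟨t, rfl⟩; exact hf0 _⟩
  simpa using exists_Ioo_wolfe_of_hasDerivAt hline hf.continuous_inner_gradient_add_smul hbdd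
    (by simpa using hdesc) hc₁ (hc₁₂.trans hc₂) hc₁₂
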